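/- arXiv:1701.01260 — 6 statements merged into one kernel-verified Lean document; each statement's English description precedes it below -/
import Mathlib

section
/- Applying the two moves — (i) if λ_i ≥ λ_{i+1}+2 and λ_j ≥ λ_{j+1}+2 for some i < j, replace λ_i by λ_i−1 and λ_{j+1} by λ_{j+1}+1; (ii) if λ_i ≥ λ_{i+1}+3, replace λ_i by λ_i−1 and λ_{i+1} by λ_{i+1}+1 — repeatedly to any strict partition of n eventually terminates, and the terminal strict partitions are exactly those of the form (s+1, s, ..., s−d+2, s−d, s−d−1, ..., 2, 1) where n = binom(s+1,2) + d with 0 ≤ d ≤ s. -/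
/-- `f` is a strict partition of `n`. -/
def IsStrictPartition (n : ℕ) (f : ℕ → ℕ) : Prop :=
  (∀ i, f (i + 1) ≤ f i) ∧ (∀ i, f (i + 1) ≠ 0 → f (i + 1) < f i) ∧
    (∀ i, n ≤ i → f i = 0) ∧ ∑ i ∈ Finset.range n, f i = n

/-- Move (i): if `λ_i ≥ λ_{i+1}+2` and `λ_j ≥ λ_{j+1}+2` for some `i < j`, replace
`λ_i` by `λ_i−1` and `λ_{j+1}` by `λ_{j+1}+1`. -/
def MoveI (f g : ℕ → ℕ) : Prop :=
  ∃ i j, i < j ∧ f (i + 1) + 2 ≤ f i ∧ f (j + 1) + 2 ≤ f j ∧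
    g = fun l => if l = i then f i - 1 else if l = j + 1 then f (j + 1) + 1 else f l

/-- Move (ii): if `λ_i ≥ λ_{i+1}+3`, replace `λ_i` by `λ_i−1` and `λ_{i+1}` by `λ_{i+1}+1`. -/
def MoveII (f g : ℕ → ℕ) : Prop :=
  ∃ i, f (i + 1) + 3 ≤ f i ∧
    g = fun l => if l = i then f i - 1 else if l = i + 1 then f (i + 1) + 1 else f l

def Move (f g : ℕ → ℕ) : Prop := MoveI f g ∨ MoveII f g

/-- The strict partition `(s+1, s, …, s−d+2, s−d, s−d−1, …, 2, 1)` (the value `s−d+1`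
is skipped; for `d = 0` this is `(s, …, 1)`). -/
def minPart (s d : ℕ) : ℕ → ℕ := fun i =>
  if i < d then s + 1 - i else if i < s then s - i else 0

/-!
Both moves take one unit from a part and give it to a later part (`shiftUnit`). Such a move keeps
a strict partition of `n` strict and strictly increases its moment `∑ i λ_i`, which is at most
`n²`; hence every sequence of moves is finite.

A strict partition of length `s` has all gaps `λ_i - λ_{i+1}` (the last one being `λ_{s-1} - 0`)
at least `1`; it admits no move iff they are at most `2` with at most one equal to `2`. The
position `d` of that gap (`d = 0` if there is none) and `s` determine the partition through this
backward recurrence, and the result is `minPart s d`.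
-/

def shiftUnit (f : ℕ → ℕ) (a b : ℕ) : ℕ → ℕ :=
  fun l => if l = a then f a - 1 else if l = b then f b + 1 else f l

def moment (n : ℕ) (f : ℕ → ℕ) : ℕ := ∑ i ∈ Finset.range n, i * f i

lemma Move.exists_shiftUnit {f g : ℕ → ℕ} (h : Move f g) :
    ∃ a j, a ≤ j ∧ f (a + 1) + 2 ≤ f a ∧ f (j + 1) + 2 ≤ f j ∧
      (j = a → f (a + 1) + 3 ≤ f a) ∧ g = shiftUnit f a (j + 1) := by
  rcases h with ⟨i, j, hij, hi, hj, rfl⟩ | ⟨i, hi, rfl⟩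
  · exact ⟨i, j, hij.le, hi, hj, fun h => absurd h hij.ne', rfl⟩
  · exact ⟨i, i, le_rfl, by omega, by omega, fun _ => hi, rfl⟩

lemma sum_mul_shiftUnit_add {s : Finset ℕ} {f w : ℕ → ℕ} {a b : ℕ} (ha : a ∈ s) (hb : b ∈ s)
    (hab : a ≠ b) (hfa : 1 ≤ f a) :
    ∑ i ∈ s, w i * shiftUnit f a b i + w a = ∑ i ∈ s, w i * f i + w b := by
  have key : ∀ l, w l * shiftUnit f a b l + (if l = a then w a else 0) =
      w l * f l + (if l = b then w b else 0) := by
    intro l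
    unfold shiftUnit
    split_ifs <;> subst_vars
    · exact absurd rfl hab
    · rw [← Nat.mul_add_one, Nat.sub_add_cancel hfa, add_zero]
    · ring
    · rfl
  have := Finset.sum_congr rfl fun l (_ : l ∈ s) => key l
  rwa [Finset.sum_add_distrib, Finset.sum_add_distrib, Finset.sum_ite_eq', Finset.sum_ite_eq',
    if_pos ha, if_pos hb] at this

namespace IsStrictPartition

variable {n : ℕ} {f : ℕ → ℕ}

lemma antitone (hf : IsStrictPartition n f) : Antitone f :=
  antitone_nat_of_succ_le hf.1

lemma succ_lt_of_two_le (hf : IsStrictPartition n f) {j : ℕ} (hj : 2 ≤ f j) : j + 1 < n := by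
  have hanti := hf.antitone
  obtain ⟨-, -, hsupp, hsum⟩ := hf
  by_contra! hjn
  have : 2 * n ≤ n := calc
    2 * n = ∑ _i ∈ Finset.range n, 2 := by simp [mul_comm]
    _ ≤ ∑ i ∈ Finset.range n, f i := Finset.sum_le_sum fun i hi =>
      hj.trans (hanti (by rw [Finset.mem_range] at hi; omega))
    _ = n := hsum
  have := hsupp j (by omega)
  omega

lemma shiftUnit (hf : IsStrictPartition n f) {a j : ℕ} (haj : a ≤ j) (ha : f (a + 1) + 2 ≤ f a)
    (hj : f (j + 1) + 2 ≤ f j) (hsame : j = a → f (a + 1) + 3 ≤ f a) :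
    IsStrictPartition n (shiftUnit f a (j + 1)) := by
  have hjn := hf.succ_lt_of_two_le (by omega : 2 ≤ f j)
  obtain ⟨hmono, hstrict, hsupp, hsum⟩ := hf
  refine ⟨fun i => ?_, fun i => ?_, fun i hi => ?_, ?_⟩
  · have := hmono i
    simp only [_root_.shiftUnit, Nat.add_right_cancel_iff]
    split_ifs <;> subst_vars <;> omega
  · have := hmono i
    have := hstrict i
    simp only [_root_.shiftUnit, Nat.add_right_cancel_iff]
    split_ifs <;> subst_vars <;> omega
  · unfold _root_.shiftUnit
    rw [if_neg (by omega), if_neg (by omega), hsupp i hi]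
  · have han : a < n := by omega
    have hfa : 1 ≤ f a := by omega
    have := sum_mul_shiftUnit_add (w := fun _ => 1) (Finset.mem_range.2 han)
      (Finset.mem_range.2 hjn) (by omega) hfa
    simp only [one_mul] at this
    omega

lemma moment_lt_moment_shiftUnit (hf : IsStrictPartition n f) {a j : ℕ} (haj : a ≤ j)
    (ha : 1 ≤ f a) (hj : 2 ≤ f j) : moment n f < moment n (_root_.shiftUnit f a (j + 1)) := by
  have hjn := hf.succ_lt_of_two_le hj
  have := sum_mul_shiftUnit_add (w := id) (Finset.mem_range.2 (show a < n by omega))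
    (Finset.mem_range.2 hjn) (by omega) ha
  simp only [id] at this
  unfold moment
  omega

lemma move (hf : IsStrictPartition n f) {g : ℕ → ℕ} (h : Move f g) :
    IsStrictPartition n g ∧ moment n f < moment n g := by
  obtain ⟨a, j, haj, ha, hj, hsame, rfl⟩ := h.exists_shiftUnit
  exact ⟨hf.shiftUnit haj ha hj hsame, hf.moment_lt_moment_shiftUnit haj (by omega) (by omega)⟩

lemma moment_le (hf : IsStrictPartition n f) : moment n f ≤ n * n := calc
  moment n f ≤ ∑ i ∈ Finset.range n, n * f i :=
    Finset.sum_le_sum fun i hi => Nat.mul_le_mul_right _ (Finset.mem_range.1 hi).le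
  _ = n * n := by rw [← Finset.mul_sum, hf.2.2.2]

end IsStrictPartition

theorem not_forall_move_of_isStrictPartition {n : ℕ} {F : ℕ → ℕ → ℕ}
    (hF : IsStrictPartition n (F 0)) : ¬ ∀ k, Move (F k) (F (k + 1)) := by
  intro hmove
  have hpart : ∀ k, IsStrictPartition n (F k) := fun k => by
    induction k with
    | zero => exact hF
    | succ k ih => exact (ih.move (hmove k)).1
  have hmono : StrictMono fun k => moment n (F k) :=
    strictMono_nat_of_lt_succ fun k => ((hpart k).move (hmove k)).2
  have hlow : n * n + 1 ≤ moment n (F (n * n + 1)) := hmono.id_le _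
  have hup := (hpart (n * n + 1)).moment_le
  omega

lemma minPart_eq_succ_add {s d : ℕ} (hds : d ≤ s) (i : ℕ) :
    minPart s d i = minPart s d (i + 1) + if i + 1 = d then 2 else if i < s then 1 else 0 := by
  simp only [minPart]
  split_ifs <;> omega

lemma sum_range_ite_lt {M : Type*} [AddCommMonoid M] (g : ℕ → M) {k m : ℕ} (hkm : k ≤ m) :
    ∑ i ∈ Finset.range m, (if i < k then g i else 0) = ∑ i ∈ Finset.range k, g i := by
  rw [← Finset.sum_filter]
  congr 1
  ext i
  simp only [Finset.mem_filter, Finset.mem_range]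
  omega

lemma sum_minPart {s d m : ℕ} (hds : d ≤ s) (hsm : s ≤ m) :
    ∑ i ∈ Finset.range m, minPart s d i = s * (s + 1) / 2 + d := by
  have hsplit : ∀ i, minPart s d i = (if i < s then s - i else 0) + (if i < d then 1 else 0) := by
    intro i
    simp only [minPart]
    split_ifs <;> omega
  have hgauss : ∑ i ∈ Finset.range s, (s - i) = s * (s + 1) / 2 := calc
    _ = ∑ i ∈ Finset.range (s + 1), (s + 1 - 1 - i) := by simp [Finset.sum_range_succ]
    _ = ∑ i ∈ Finset.range (s + 1), i := Finset.sum_range_reflect id (s + 1)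
    _ = s * (s + 1) / 2 := by rw [Finset.sum_range_id, Nat.add_sub_cancel, mul_comm]
  simp only [hsplit, Finset.sum_add_distrib, sum_range_ite_lt _ hsm,
    sum_range_ite_lt _ (hds.trans hsm), hgauss, Finset.sum_const, Finset.card_range, smul_eq_mul,
    mul_one]

lemma forall_not_move_iff {f : ℕ → ℕ} :
    (∀ g, ¬ Move f g) ↔ (∀ i, f i ≤ f (i + 1) + 2) ∧
      ∀ i j, f (i + 1) + 2 ≤ f i → f (j + 1) + 2 ≤ f j → i = j := by
  constructor
  · intro h
    refine ⟨fun i => ?_, fun i j hi hj => ?_⟩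
    · by_contra! hi
      exact h _ (Or.inr ⟨i, by omega, rfl⟩)
    · by_contra hij
      rcases Nat.lt_or_gt_of_ne hij with hij | hij
      · exact h _ (Or.inl ⟨i, j, hij, hi, hj, rfl⟩)
      · exact h _ (Or.inl ⟨j, i, hij, hj, hi, rfl⟩)
  · rintro ⟨hgap, hunique⟩ g (⟨i, j, hij, hi, hj, -⟩ | ⟨i, hi, -⟩)
    · exact hij.ne (hunique i j hi hj)
    · have := hgap i
      omega

lemma minPart_not_move {s d : ℕ} (hds : d ≤ s) (g : ℕ → ℕ) : ¬ Move (minPart s d) g := by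
  refine forall_not_move_iff.2 ⟨fun i => ?_, fun i j hi hj => ?_⟩ g
  · have := minPart_eq_succ_add hds i
    split_ifs at this <;> omega
  · have hi' := minPart_eq_succ_add hds i
    have hj' := minPart_eq_succ_add hds j
    split_ifs at hi' hj' <;> omega

lemma eq_of_forall_eq_succ_add {M : Type*} [Add M] {f g c : ℕ → M} {N : ℕ} (hf : ∀ i, f i = f (i + 1) + c i)
    (hg : ∀ i, g i = g (i + 1) + c i) (hN : ∀ i, N ≤ i → f i = g i) : f = g := by
  suffices ∀ k i, N ≤ i + k → f i = g i from funext fun i => this N i (by omega)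
  intro k
  induction k with
  | zero => exact hN
  | succ k ih => exact fun i hi => by rw [hf, hg, ih (i + 1) (by omega)]

lemma exists_forall_eq_zero_iff_le {f : ℕ → ℕ} (hf : Antitone f) (h : ∃ l, f l = 0) :
    ∃ L, ∀ i, f i = 0 ↔ L ≤ i :=
  ⟨Nat.find h, fun _ => ⟨fun hi => Nat.find_min' h hi,
    fun hi => Nat.le_zero.1 (Nat.find_spec h ▸ hf hi)⟩⟩

lemma IsStrictPartition.exists_length {n : ℕ} {f : ℕ → ℕ} (hf : IsStrictPartition n f) :
    ∃ L ≤ n, (∀ i, f i = 0 ↔ L ≤ i) ∧ ∀ i < L, f (i + 1) < f i := by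
  have hfn : f n = 0 := hf.2.2.1 n le_rfl
  obtain ⟨L, hL⟩ := exists_forall_eq_zero_iff_le hf.antitone ⟨n, hfn⟩
  refine ⟨L, (hL n).1 hfn, hL, fun i hi => ?_⟩
  by_cases hi' : f (i + 1) = 0
  · have := (hL i).not.2 (by omega)
    omega
  · exact hf.2.1 i hi'

lemma IsStrictPartition.exists_eq_minPart {n : ℕ} {f : ℕ → ℕ} (hf : IsStrictPartition n f)
    (h : ∀ g, ¬ Move f g) : ∃ s d, d ≤ s ∧ s ≤ n ∧ f = minPart s d := by
  obtain ⟨hgap, hunique⟩ := forall_not_move_iff.1 h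
  obtain ⟨L, hLn, hL, hdesc⟩ := hf.exists_length
  obtain ⟨d, hdL, hd⟩ : ∃ d ≤ L, ∀ i, f (i + 1) + 2 ≤ f i ↔ i + 1 = d := by
    by_cases hp : ∃ p, f (p + 1) + 2 ≤ f p
    · obtain ⟨p, hp⟩ := hp
      have hpL : p < L := by
        by_contra! hpL
        have := (hL p).2 hpL
        omega
      exact ⟨p + 1, hpL, fun i => ⟨fun hi => by rw [hunique i p hi hp], fun hi => by
        rwa [Nat.add_right_cancel hi]⟩⟩
    · simp only [not_exists, not_le] at hp
      exact ⟨0, Nat.zero_le L, fun i => ⟨fun hi => absurd hi (hp i).not_ge,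
        fun hi => absurd hi (Nat.succ_ne_zero i)⟩⟩
  have hrec : ∀ i, f i = f (i + 1) + if i + 1 = d then 2 else if i < L then 1 else 0 := by
    intro i
    have := hgap i
    have := hd i
    split_ifs with h2 hiL
    · omega
    · have := hdesc i hiL
      omega
    · have := (hL i).2 (by omega)
      have := (hL (i + 1)).2 (by omega)
      omega
  refine ⟨L, d, hdL, hLn, eq_of_forall_eq_succ_add (N := L) hrec (minPart_eq_succ_add hdL)
    fun i hi => ?_⟩
  rw [(hL i).2 hi]
  simp only [minPart]
  split_ifs <;> omega

/-- Repeatedly applying moves (i) and (ii) to any strict partition of `n` terminates,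
and the terminal strict partitions are exactly the `minPart s d` with
`n = s(s+1)/2 + d`, `0 ≤ d ≤ s`. -/
theorem stmt5 (n : ℕ) :
    (∀ F : ℕ → ℕ → ℕ, IsStrictPartition n (F 0) → ¬ (∀ k, Move (F k) (F (k + 1)))) ∧
    (∀ f : ℕ → ℕ, IsStrictPartition n f →
      ((∀ g, ¬ Move f g) ↔ ∃ s d, d ≤ s ∧ n = s * (s + 1) / 2 + d ∧ f = minPart s d)) := by
  refine ⟨fun F => not_forall_move_of_isStrictPartition, fun f hf => ⟨fun h => ?_, ?_⟩⟩
  · obtain ⟨s, d, hds, hsn, rfl⟩ := hf.exists_eq_minPart h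
    exact ⟨s, d, hds, by rw [← sum_minPart hds hsn, hf.2.2.2], rfl⟩
  · rintro ⟨s, d, hds, -, rfl⟩
    exact minPart_not_move hds
end

section
/- Let m ≥ 1 and write m + 1 = s(s+1)/2 + d with 0 ≤ d ≤ s. Then the minimal a-value for type ²A_m, a_min = s(s²−1)/6 + d(2s+1−d)/2, satisfies a_min ≥ (√2/3)·m^{3/2} − 2m for all m, i.e., the a-values of cuspidal unipotent classes grow like c·m^{3/2} with c = √2/3. -/
/-!
From `2(m+1) = s(s+1) + 2d` and `d ≤ s` one gets `2m ≤ (s+2)²`, hence `√2 · m^{3/2} = m√(2m) ≤ m(s+2)`.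
So it suffices that `a_min ≥ m(s+2)/3 - 2m`; after eliminating `m`, six times the difference is
`3s² + 5s - 8 + d(4s - 3d) + 11d`, which is nonnegative for `s ≥ 1` and `0 ≤ d ≤ s`.
-/

lemma two_mul_le_sq_of_decomp {m s d : ℝ} (hs : 0 ≤ s) (hd : d ≤ s)
    (hdecomp : 2 * (m + 1) = s * (s + 1) + 2 * d) : 2 * m ≤ (s + 2) ^ 2 := by
  nlinarith

lemma aMin_ge_of_decomp {m s d : ℝ} (hs : 1 ≤ s) (hd₀ : 0 ≤ d) (hd : d ≤ s)
    (hdecomp : 2 * (m + 1) = s * (s + 1) + 2 * d) :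
    m * (s + 2) / 3 - 2 * m ≤ s * (s ^ 2 - 1) / 6 + d * (2 * s + 1 - d) / 2 := by
  nlinarith [mul_nonneg hd₀ (sub_nonneg.2 hd), mul_nonneg (sub_nonneg.2 hs) (by linarith : 0 ≤ 3 * s + 8)]

lemma sqrt_two_mul_rpow_three_halves {m : ℝ} (hm : 0 ≤ m) :
    √2 * m ^ ((3 : ℝ) / 2) = m * √(2 * m) := by
  rw [show (3 : ℝ) / 2 = 1 + 1 / 2 by norm_num, Real.rpow_add' hm (by norm_num), Real.rpow_one,
    ← Real.sqrt_eq_rpow, Real.sqrt_mul zero_le_two]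
  ring

theorem stmt6_general (m s d : ℕ) (hd : d ≤ s)
    (hdecomp : m + 1 = s * (s + 1) / 2 + d) :
    (s : ℝ) * ((s : ℝ) ^ 2 - 1) / 6 + (d : ℝ) * (2 * (s : ℝ) + 1 - (d : ℝ)) / 2 ≥
      Real.sqrt 2 / 3 * (m : ℝ) ^ ((3 : ℝ) / 2) - 2 * (m : ℝ) := by
  have hs : 1 ≤ s := Nat.pos_of_ne_zero (by rintro rfl; omega)
  have hdecompR : 2 * ((m : ℝ) + 1) = s * (s + 1) + 2 * d := by
    have := Nat.div_mul_cancel (Nat.even_mul_succ_self s).two_dvd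
    exact_mod_cast (by omega : 2 * (m + 1) = s * (s + 1) + 2 * d)
  have hsqrt : √(2 * (m : ℝ)) ≤ s + 2 :=
    Real.sqrt_le_iff.2 ⟨by positivity, two_mul_le_sq_of_decomp (by positivity)
      (by exact_mod_cast hd) hdecompR⟩
  calc Real.sqrt 2 / 3 * (m : ℝ) ^ ((3 : ℝ) / 2) - 2 * m
      = m * √(2 * (m : ℝ)) / 3 - 2 * m := by
        rw [← sqrt_two_mul_rpow_three_halves m.cast_nonneg]; ring
    _ ≤ m * (s + 2) / 3 - 2 * m := by gcongr
    _ ≤ _ := aMin_ge_of_decomp (by exact_mod_cast hs) d.cast_nonneg (by exact_mod_cast hd) hdecompR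

/-- Writing `m + 1 = s(s+1)/2 + d` with `0 ≤ d ≤ s`, the minimal `a`-value for type
`²A_m`, namely `s(s²−1)/6 + d(2s+1−d)/2`, satisfies
`a_min ≥ (√2/3)·m^{3/2} − 2m`. -/
theorem stmt6 (m s d : ℕ) (hm : 1 ≤ m) (hd : d ≤ s)
    (hdecomp : m + 1 = s * (s + 1) / 2 + d) :
    (s : ℝ) * ((s : ℝ) ^ 2 - 1) / 6 + (d : ℝ) * (2 * (s : ℝ) + 1 - (d : ℝ)) / 2 ≥
      Real.sqrt 2 / 3 * (m : ℝ) ^ ((3 : ℝ) / 2) - 2 * (m : ℝ) :=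
  stmt6_general m s d hd hdecomp
end

section
/- Let λ be a partition of N with conjugate λ* = (1^{r_1},...,h^{r_h}) in exponential notation, and suppose r_i = r_{i+1} = 2 and r_j = r_{j+1} = 2 for indices i < j (with i+1 < j). Then the exponent vector with r'_{i−1} = r_{i−1}+2, r'_i = r_i−2, r'_{j+1} = r_{j+1}−2, r'_{j+2} = r_{j+2}+2 and all other entries unchanged defines (as conjugate of) a partition μ of N which is strictly smaller than λ in the dominance order. -/
/-!
Over `ℤ` the move adds `2 (e_{i-1} - e_i - e_{j+1} + e_{j+2})` to `r`, so every weighted sum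
`∑ w_k r_k` with `w_0 = 0` changes by `2 (w_{i-1} - w_i - w_{j+1} + w_{j+2})`. The size of the
partition is the weighted sum with `w_k = k`, which is unchanged; the sum of its first `l` parts
(the tail sums of `r`) is the one with `w_k = min l k`, which changes by
`-2 [i ≤ l] + 2 [j + 2 ≤ l] ≤ 0`, strictly at `l = i`.
-/

open Finset

theorem sum_Icc_one_sum_Icc_eq_sum_min_smul {M : Type*} [AddCommMonoid M] (l H : ℕ)
    (f : ℕ → M) :
    ∑ j ∈ Icc 1 l, ∑ k ∈ Icc j H, f k = ∑ k ∈ Icc 1 H, min l k • f k := by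
  rw [sum_comm' (t' := Icc 1 H) (s' := fun k => Icc 1 (min l k)) (by intros; simp; omega)]
  simp only [sum_const, Nat.card_Icc, Nat.add_sub_cancel]

theorem sum_Icc_one_mul_ite_eq {H a : ℕ} (w : ℕ → ℤ) (hw : w 0 = 0) (ha : a ≤ H) :
    ∑ k ∈ Icc 1 H, w k * (if k = a then 1 else 0) = w a := by
  simp only [mul_ite, mul_one, mul_zero, sum_ite_eq', mem_Icc]
  split_ifs with h
  · rfl
  · obtain rfl : a = 0 := by omega
    exact hw.symm

def secondMove (r : ℕ → ℕ) (i j : ℕ) : ℕ → ℕ := fun k =>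
  if k = i - 1 then r (i - 1) + 2 else if k = i then r i - 2
  else if k = j + 1 then r (j + 1) - 2 else if k = j + 2 then r (j + 2) + 2 else r k

section secondMove

variable {r : ℕ → ℕ} {i j : ℕ}

theorem natCast_secondMove (hi : 1 ≤ i) (hij : i ≤ j) (hri : 2 ≤ r i) (hrj : 2 ≤ r (j + 1))
    (k : ℕ) :
    (secondMove r i j k : ℤ) = r k + 2 * ((if k = i - 1 then 1 else 0) - (if k = i then 1 else 0)
      - (if k = j + 1 then 1 else 0) + (if k = j + 2 then 1 else 0)) := by
  unfold secondMove
  split_ifs <;> subst_vars <;> omega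

theorem sum_Icc_one_mul_secondMove {H : ℕ} (hi : 1 ≤ i) (hij : i ≤ j) (hri : 2 ≤ r i)
    (hrj : 2 ≤ r (j + 1)) (hjH : j + 2 ≤ H) (w : ℕ → ℤ) (hw : w 0 = 0) :
    ∑ k ∈ Icc 1 H, w k * secondMove r i j k
      = ∑ k ∈ Icc 1 H, w k * r k + 2 * (w (i - 1) - w i - w (j + 1) + w (j + 2)) := by
  simp only [natCast_secondMove hi hij hri hrj, mul_add, mul_left_comm (w _) 2, mul_sub,
    sum_add_distrib, sum_sub_distrib, ← mul_sum]
  rw [sum_Icc_one_mul_ite_eq w hw (by omega), sum_Icc_one_mul_ite_eq w hw (by omega),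
    sum_Icc_one_mul_ite_eq w hw (by omega), sum_Icc_one_mul_ite_eq w hw hjH]

end secondMove

theorem stmt10_general (N H : ℕ) (r : ℕ → ℕ) (i j : ℕ) (hi : 1 ≤ i) (hij : i + 1 < j)
    (hjH : j + 2 ≤ H)
    (hsum : ∑ k ∈ Icc 1 H, k * r k = N)
    (hri : r i = 2) (hrj1 : r (j + 1) = 2)
    (r' : ℕ → ℕ)
    (hr' : r' = fun k => if k = i - 1 then r (i - 1) + 2 else if k = i then r i - 2
      else if k = j + 1 then r (j + 1) - 2 else if k = j + 2 then r (j + 2) + 2 else r k) :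
    (∑ k ∈ Icc 1 H, k * r' k = N) ∧
    (∀ l, ∑ j' ∈ Icc 1 l, (∑ k ∈ Icc j' H, r' k) ≤ ∑ j' ∈ Icc 1 l, (∑ k ∈ Icc j' H, r k)) ∧
    (∃ j', 1 ≤ j' ∧ (∑ k ∈ Icc j' H, r' k) ≠ (∑ k ∈ Icc j' H, r k)) := by
  obtain rfl : r' = secondMove r i j := hr'
  have hmove := sum_Icc_one_mul_secondMove hi (by omega) hri.ge hrj1.ge hjH
  have hpartial (l : ℕ) :
      ∑ j' ∈ Icc 1 l, ∑ k ∈ Icc j' H, (secondMove r i j k : ℤ)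
        = ∑ j' ∈ Icc 1 l, ∑ k ∈ Icc j' H, (r k : ℤ)
          + 2 * ((min l (i - 1) : ℕ) - (min l i : ℕ) - (min l (j + 1) : ℕ)
            + (min l (j + 2) : ℕ)) := by
    simp only [sum_Icc_one_sum_Icc_eq_sum_min_smul, nsmul_eq_mul]
    exact hmove (fun k => (min l k : ℕ)) (by simp)
  refine ⟨?_, fun l => ?_, ?_⟩
  · zify at hsum ⊢
    rw [hmove Nat.cast (by simp), hsum]
    push_cast [hi]
    ring
  · zify
    rw [hpartial]
    omega
  · by_contra! htail
    have htail' : ∀ j' ∈ Icc 1 i,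
        ∑ k ∈ Icc j' H, (secondMove r i j k : ℤ) = ∑ k ∈ Icc j' H, (r k : ℤ) :=
      fun j' hj' => by exact_mod_cast htail j' (mem_Icc.1 hj').1
    have hpartial_i := hpartial i
    rw [sum_congr rfl htail'] at hpartial_i
    omega

/-- Second move on exponent vectors (type `C_m`): if `r_i = r_{i+1} = 2` and
`r_j = r_{j+1} = 2` for indices `i < j` (with `i+1 < j`), then setting
`r_{i−1} ↦ r_{i−1}+2`, `r_i ↦ r_i−2`, `r_{j+1} ↦ r_{j+1}−2`, `r_{j+2} ↦ r_{j+2}+2`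
defines (as conjugate, with parts the tail sums) a partition `μ` of `N` which is
strictly smaller than `λ` in the dominance order. -/
theorem stmt10 (N H : ℕ) (r : ℕ → ℕ) (i j : ℕ) (hi : 1 ≤ i) (hij : i + 1 < j)
    (hjH : j + 2 ≤ H)
    (hr0 : r 0 = 0) (hsupp : ∀ k, H < k → r k = 0)
    (hsum : ∑ k ∈ Icc 1 H, k * r k = N)
    (hri : r i = 2) (hri1 : r (i + 1) = 2) (hrj : r j = 2) (hrj1 : r (j + 1) = 2)
    (r' : ℕ → ℕ)
    (hr' : r' = fun k => if k = i - 1 then r (i - 1) + 2 else if k = i then r i - 2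
      else if k = j + 1 then r (j + 1) - 2 else if k = j + 2 then r (j + 2) + 2 else r k) :
    (∑ k ∈ Icc 1 H, k * r' k = N) ∧
    (∀ l, ∑ j' ∈ Icc 1 l, (∑ k ∈ Icc j' H, r' k) ≤ ∑ j' ∈ Icc 1 l, (∑ k ∈ Icc j' H, r k)) ∧
    (∃ j', 1 ≤ j' ∧ (∑ k ∈ Icc j' H, r' k) ≠ (∑ k ∈ Icc j' H, r k)) :=
  stmt10_general N H r i j hi hij hjH hsum hri hrj1 r' hr'
end

section
/- Let λ = (λ_1 ≥ λ_2 ≥ ... ≥ λ_{2l} > 0) be a partition of 2m into an even number of odd parts, each occurring at most twice. Define a_i = (λ_{2l+1−i} − 1)/2 + ⌊i/2⌋ for 1 ≤ i ≤ 2l. Then the sequence (a_1, a_2, ..., a_{2l}) is nondecreasing: a_1 ≤ a_2 ≤ ... ≤ a_{2l}. -/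
theorem monotone_half_reflected_add_half {f : ℕ → ℕ} (hf : Antitone f) (n : ℕ) :
    Monotone fun i => (f (n - i) - 1) / 2 + i / 2 :=
  fun _ _ hij => add_le_add
    (Nat.div_le_div_right (Nat.sub_le_sub_right (hf (Nat.sub_le_sub_left hij n)) 1))
    (Nat.div_le_div_right hij)

-- `f k = λ_{k+1}`, so `a_i` is the left-hand side below.
theorem stmt11_general (l : ℕ) (f : ℕ → ℕ)
    (hmono : ∀ k, f (k + 1) ≤ f k) :
    ∀ i, 1 ≤ i → i < 2 * l →
      (f (2 * l - i) - 1) / 2 + i / 2 ≤ (f (2 * l - (i + 1)) - 1) / 2 + (i + 1) / 2 :=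
  fun i _ _ => monotone_half_reflected_add_half (antitone_nat_of_succ_le hmono) (2 * l)
    (Nat.le_succ i)

/-- Let `λ = (λ_1 ≥ … ≥ λ_{2l} > 0)` be a partition of `2m` into an even number of odd
parts, each occurring at most twice (here `f k = λ_{k+1}`). Then the entries
`a_i = (λ_{2l+1−i} − 1)/2 + ⌊i/2⌋` form a nondecreasing sequence. -/
theorem stmt11 (m l : ℕ) (f : ℕ → ℕ) (hl : 1 ≤ l)
    (hmono : ∀ k, f (k + 1) ≤ f k)
    (hpos : ∀ k, k < 2 * l → 0 < f k)
    (hzero : ∀ k, 2 * l ≤ k → f k = 0)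
    (hsum : ∑ k ∈ Finset.range (2 * l), f k = 2 * m)
    (hodd : ∀ k, k < 2 * l → Odd (f k))
    (hmult : ∀ k, k + 2 < 2 * l → f (k + 2) < f k) :
    ∀ i, 1 ≤ i → i < 2 * l →
      (f (2 * l - i) - 1) / 2 + i / 2 ≤ (f (2 * l - (i + 1)) - 1) / 2 + (i + 1) / 2 :=
  stmt11_general l f hmono
end

section
/- Let m ≥ 4 and write m = s² + d with s ≥ 1 and 0 ≤ d ≤ 2s. Define D(m) = s(s−1)(4s+1)/6 + (d(2s+1−d) if d ≤ s else d(4s−d) − s(2s−1)). Then D(m) ≥ (2/3)·(m−1)^{3/2} − 2m for all m ≥ 4. -/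
/-- Minimal a-value for types D_m, ²D_m, where m = s² + d, 0 ≤ d ≤ 2s. -/
def aDmin (s d : ℕ) : ℕ :=
  s * (s - 1) * (4 * s + 1) / 6 +
    (if d ≤ s then d * (2 * s + 1 - d) else d * (4 * s - d) - s * (2 * s - 1))

/-!
Concavity of the square root at `s²` gives `√(m - 1) ≤ (s² + m - 1) / (2s)`, so
`(m - 1)^{3/2} ≤ (m - 1)(s² + m - 1) / (2s)`. After multiplying by `6s`, the claim becomes
a polynomial inequality in `s` and `d`, which holds with room to spare in both ranges
`d ≤ s` and `s < d ≤ 2s` of the case distinction defining `D(m)`.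
-/

theorem six_dvd_mul_sub_one_mul_four_mul_add_one {s : ℕ} (hs : 1 ≤ s) :
    6 ∣ s * (s - 1) * (4 * s + 1) := by
  have hzmod : ∀ x : ZMod 6, x * (x - 1) * (4 * x + 1) = 0 := by decide
  rw [← ZMod.natCast_eq_zero_iff]
  push_cast [Nat.cast_sub hs]
  exact hzmod _

theorem cast_mul_sub_one_mul_div_six {s : ℕ} (hs : 1 ≤ s) :
    ((s * (s - 1) * (4 * s + 1) / 6 : ℕ) : ℝ) = s * (s - 1) * (4 * s + 1) / 6 := by
  rw [Nat.cast_div (six_dvd_mul_sub_one_mul_four_mul_add_one hs) (by norm_num)]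
  push_cast [Nat.cast_sub hs]
  ring

theorem cast_aDmin_of_le {s d : ℕ} (hs : 1 ≤ s) (h : d ≤ s) :
    (aDmin s d : ℝ) = s * (s - 1) * (4 * s + 1) / 6 + d * (2 * s + 1 - d) := by
  rw [aDmin, if_pos h, Nat.cast_add, cast_mul_sub_one_mul_div_six hs]
  push_cast [Nat.cast_sub (by omega : d ≤ 2 * s + 1)]
  ring

theorem cast_aDmin_of_lt {s d : ℕ} (hs : 1 ≤ s) (h : s < d) (hd : d ≤ 2 * s) :
    (aDmin s d : ℝ) =
      s * (s - 1) * (4 * s + 1) / 6 + (d * (4 * s - d) - s * (2 * s - 1)) := by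
  have hle : s * (2 * s - 1) ≤ d * (4 * s - d) :=
    calc s * (2 * s - 1) ≤ d * (2 * s) := Nat.mul_le_mul (by omega) (by omega)
      _ ≤ d * (4 * s - d) := Nat.mul_le_mul_left _ (by omega)
  rw [aDmin, if_neg (not_le.2 h), Nat.cast_add, cast_mul_sub_one_mul_div_six hs]
  push_cast [Nat.cast_sub hle, Nat.cast_sub (by omega : d ≤ 4 * s),
    Nat.cast_sub (by omega : 1 ≤ 2 * s)]
  ring

theorem aDmin_polynomial_lower_bound {s d : ℕ} (hs : 1 ≤ s) (hd : d ≤ 2 * s) :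
    2 * ((s : ℝ) ^ 2 + d - 1) * (2 * s ^ 2 + d - 1) - 12 * s * (s ^ 2 + d) ≤
      6 * s * aDmin s d := by
  have hs' : (1 : ℝ) ≤ s := by exact_mod_cast hs
  have hd0 : (0 : ℝ) ≤ d := d.cast_nonneg
  rcases le_or_gt d s with h | h
  · have h' : (d : ℝ) ≤ s := by exact_mod_cast h
    rw [cast_aDmin_of_le hs h]
    nlinarith [mul_nonneg (mul_nonneg hd0 (by linarith : (0 : ℝ) ≤ s)) (sub_nonneg.2 h')]
  · have h' : (s : ℝ) < d := by exact_mod_cast h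
    have hd' : (d : ℝ) ≤ 2 * s := by exact_mod_cast hd
    rw [cast_aDmin_of_lt hs h hd]
    nlinarith [mul_nonneg (mul_nonneg hd0 (by linarith : (0 : ℝ) ≤ s)) (sub_nonneg.2 hd')]

theorem two_mul_mul_sqrt_le_sq_add (a : ℝ) {x : ℝ} (hx : 0 ≤ x) : 2 * a * √x ≤ a ^ 2 + x := by
  nlinarith [sq_nonneg (√x - a), Real.sq_sqrt hx]

theorem rpow_three_halves_le {a x : ℝ} (ha : 0 < a) (hx : 0 ≤ x) :
    x ^ ((3 : ℝ) / 2) ≤ x * (a ^ 2 + x) / (2 * a) := by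
  have hsplit : x ^ ((3 : ℝ) / 2) = x * √x := by
    rw [show (3 : ℝ) / 2 = 1 + 1 / 2 by norm_num, Real.rpow_add' hx (by norm_num),
      Real.rpow_one, Real.sqrt_eq_rpow]
  rw [hsplit, le_div_iff₀ (by positivity), mul_assoc, mul_comm (√x)]
  exact mul_le_mul_of_nonneg_left (two_mul_mul_sqrt_le_sq_add a hx) hx

theorem stmt15_general (m s d : ℕ) (hs : 1 ≤ s) (hd : d ≤ 2 * s)
    (hdecomp : m = s ^ 2 + d) :
    (2 / 3 : ℝ) * ((m : ℝ) - 1) ^ ((3 : ℝ) / 2) - 2 * (m : ℝ) ≤ (aDmin s d : ℝ) := by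
  subst hdecomp
  have hs' : (0 : ℝ) < s := by exact_mod_cast hs
  have hx : (0 : ℝ) ≤ (s : ℝ) ^ 2 + d - 1 := by
    nlinarith [(by exact_mod_cast hs : (1 : ℝ) ≤ s), d.cast_nonneg (α := ℝ)]
  have hD : ((s : ℝ) ^ 2 + d - 1) * (s ^ 2 + (s ^ 2 + d - 1)) / (2 * s) ≤
      3 / 2 * (aDmin s d + 2 * (s ^ 2 + d)) := by
    rw [div_le_iff₀ (by positivity)]
    linarith [aDmin_polynomial_lower_bound hs hd]
  push_cast
  linarith [rpow_three_halves_le hs' hx]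

/-- For `m ≥ 4` written as `m = s² + d` with `s ≥ 1`, `0 ≤ d ≤ 2s`, one has
`D(m) ≥ (2/3)·(m−1)^{3/2} − 2m`. -/
theorem stmt15 (m s d : ℕ) (hm : 4 ≤ m) (hs : 1 ≤ s) (hd : d ≤ 2 * s)
    (hdecomp : m = s ^ 2 + d) :
    (2 / 3 : ℝ) * ((m : ℝ) - 1) ^ ((3 : ℝ) / 2) - 2 * (m : ℝ) ≤ (aDmin s d : ℝ) :=
  stmt15_general m s d hs hd hdecomp
end

section
/- For a symbol S with two rows of entries a_1, a_3, ..., a_{2s−1} and a_2, a_4, ..., a_{2s} (all nonnegative integers), define A(S) = Σ_{i<j} max(a_i, a_j) − Σ_{i=1}^{s−1} binom(2i, 2) − 2·Σ_{i=1}^{2s} binom(a_i + 1, 2) + m², where m is the rank of the symbol. For the symbol S_min with rows (0, 2, 4, ..., 2(s−1)) and (1, 3, ..., 2(s−d)−1, 2(s−d+1), ..., 2s) where m = s² + d and 0 ≤ d ≤ s, one has m(m−1) − A(S_min) = s(s−1)(4s+1)/6 + d(2s+1−d). -/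
/-!
Since `m(m-1) - m² = -m`, only the sums in `A(S)` matter. Split the sum of pairwise maxima into
the top row, the bottom row (both nondecreasing, so a pair contributes its later entry) and the
top × bottom cross terms; for a bottom entry `b ∈ [2x, 2x+2]` the cross sum is
`Σ_{i<s} max(2i, b) = (x+1)b + s(s-1) - x(x+1)`. Writing the `x`-th bottom entry as `2x+1+e_x`
with `e_x = [s-d ≤ x]`, everything becomes one sum over `x < s` with summand
`s(s-1) - (3x²+3x+1) - x(2x+1) - e_x(2x+3)`: the first two terms add up to `-s²`, and the
`e_x` terms to `-d(2s+2-d)`.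
-/

open Finset

/-- The combined entries of the symbol `S_min`: the first `s` entries are the top row
`(0, 2, …, 2(s−1))`, the last `s` are the bottom row
`(1, 3, …, 2(s−d)−1, 2(s−d+1), …, 2s)`. -/
def symbEntry (s d k : ℕ) : ℕ :=
  if k < s then 2 * k
  else if k - s < s - d then 2 * (k - s) + 1 else 2 * (k - s) + 2

/-- `A(S) = Σ_{i<j} max(a_i, a_j) − Σ_{i=1}^{s−1} C(2i,2) − 2·Σ_i C(a_i+1,2) + m²`
for a symbol with `2s` entries `a : ℕ → ℕ` and rank `m`. -/
def symbA (s m : ℕ) (a : ℕ → ℕ) : ℤ :=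
  (∑ i ∈ range (2 * s), ∑ j ∈ range (2 * s),
      if i < j then (max (a i) (a j) : ℤ) else 0) -
    (∑ i ∈ Icc 1 (s - 1), (Nat.choose (2 * i) 2 : ℤ)) -
    2 * (∑ i ∈ range (2 * s), (Nat.choose (a i + 1) 2 : ℤ)) + (m : ℤ) ^ 2

def pairMaxSum (n : ℕ) (a : ℕ → ℤ) : ℤ :=
  ∑ j ∈ range n, ∑ i ∈ range j, max (a i) (a j)

theorem sum_ite_lt_max_eq_pairMaxSum (n : ℕ) (a : ℕ → ℤ) :
    ∑ i ∈ range n, ∑ j ∈ range n, (if i < j then max (a i) (a j) else 0) =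
      pairMaxSum n a := by
  rw [sum_comm]
  refine sum_congr rfl fun j hj => ?_
  rw [← sum_filter]
  congr 1
  ext i
  simp only [mem_filter, mem_range] at hj ⊢
  omega

theorem pairMaxSum_add (n k : ℕ) (a : ℕ → ℤ) :
    pairMaxSum (n + k) a = pairMaxSum n a + pairMaxSum k (fun x => a (n + x)) +
      ∑ x ∈ range k, ∑ i ∈ range n, max (a i) (a (n + x)) := by
  simp only [pairMaxSum, sum_range_add, sum_add_distrib]
  ring

theorem pairMaxSum_of_monotoneOn {n : ℕ} {a : ℕ → ℤ} (ha : MonotoneOn a (Set.Iio n)) :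
    pairMaxSum n a = ∑ j ∈ range n, j * a j := by
  refine sum_congr rfl fun j hj => ?_
  have hj : j < n := mem_range.1 hj
  rw [sum_congr rfl fun i hi => max_eq_right (ha (Set.mem_Iio.2 ((mem_range.1 hi).trans hj))
    (Set.mem_Iio.2 hj) (mem_range.1 hi).le), sum_const, card_range, nsmul_eq_mul]

theorem sum_range_max_two_mul {x n : ℕ} {c : ℤ} (hxn : x < n) (hc : 2 * x ≤ c)
    (hc' : c ≤ 2 * x + 2) :
    ∑ i ∈ range n, max (2 * (i : ℤ)) c = (x + 1) * c + n * (n - 1) - x * (x + 1) := by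
  induction n, hxn using Nat.le_induction with
  | base =>
    rw [sum_congr rfl fun i hi => max_eq_right (by have := mem_range.1 hi; omega)]
    simp
    ring
  | succ n hn ih =>
    rw [sum_range_succ, ih, max_eq_left (by omega)]
    push_cast
    ring

theorem two_mul_choose_two (n : ℕ) : 2 * (n.choose 2 : ℤ) = n * (n - 1) := by
  have h : ((2 * (n.choose 2 : ℤ) : ℤ) : ℚ) = ((n * (n - 1) : ℤ) : ℚ) := by
    push_cast
    rw [Nat.cast_choose_two]
    ring
  exact_mod_cast h

theorem sum_Icc_choose_two_mul (s : ℕ) :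
    ∑ i ∈ Icc 1 (s - 1), ((2 * i).choose 2 : ℤ) =
      ∑ x ∈ range s, (x : ℤ) * (2 * x - 1) := by
  have hsub : Icc 1 (s - 1) ⊆ range s := fun i hi => by
    simp only [mem_Icc, mem_range] at hi ⊢
    omega
  rw [sum_subset hsub fun i hi hi' => by
    simp only [mem_Icc, mem_range] at hi hi'
    simp [show i = 0 by omega]]
  refine sum_congr rfl fun x _ => ?_
  have h := two_mul_choose_two (2 * x)
  push_cast at h
  linarith

theorem sum_range_three_mul_sq_add_three_mul_add_one (n : ℕ) :
    ∑ x ∈ range n, (3 * (x : ℤ) ^ 2 + 3 * x + 1) = (n : ℤ) ^ 3 := by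
  induction n with
  | zero => simp
  | succ n ih =>
    rw [sum_range_succ, ih]
    push_cast
    ring

theorem sum_Ico_two_mul_add_three {t n : ℕ} (h : t ≤ n) :
    ∑ x ∈ Ico t n, (2 * (x : ℤ) + 3) = (n - t) * (n + t + 2) := by
  induction n, h using Nat.le_induction with
  | base => simp
  | succ n hn ih =>
    rw [sum_Ico_succ_top hn, ih]
    push_cast
    ring

theorem six_mul_sum_range_mul_two_mul_add_one (n : ℕ) :
    6 * ∑ x ∈ range n, x * (2 * x + 1) = n * (n - 1) * (4 * n + 1) := by
  induction n with
  | zero => simp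
  | succ n ih =>
    rw [sum_range_succ, mul_add, ih]
    cases n with
    | zero => simp
    | succ n =>
      simp only [Nat.add_sub_cancel]
      ring

theorem sum_range_mul_two_mul_add_one (n : ℕ) :
    ∑ x ∈ range n, x * (2 * x + 1) = n * (n - 1) * (4 * n + 1) / 6 := by
  rw [← six_mul_sum_range_mul_two_mul_add_one, Nat.mul_div_cancel_left _ (by norm_num)]

theorem symbEntry_of_lt {s d k : ℕ} (h : k < s) : symbEntry s d k = 2 * k := if_pos h

theorem symbEntry_add (s d x : ℕ) :
    symbEntry s d (s + x) = if x < s - d then 2 * x + 1 else 2 * x + 2 := by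
  simp [symbEntry]

theorem pairMaxSum_symbEntry (s d : ℕ) :
    pairMaxSum (2 * s) (fun k => (symbEntry s d k : ℤ)) =
      ∑ x ∈ range s, (2 * x * (x : ℤ) + (2 * x + 1) * symbEntry s d (s + x) + s * (s - 1)
        - x * (x + 1)) := by
  have htop : MonotoneOn (fun k => (symbEntry s d k : ℤ)) (Set.Iio s) := by
    intro i hi j hj hij
    simp only [symbEntry_of_lt (Set.mem_Iio.1 hi), symbEntry_of_lt (Set.mem_Iio.1 hj)]
    omega
  have hbot : Monotone (fun x => (symbEntry s d (s + x) : ℤ)) := by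
    intro i j hij
    simp only [symbEntry_add]
    split_ifs <;> omega
  rw [two_mul, pairMaxSum_add, pairMaxSum_of_monotoneOn htop,
    pairMaxSum_of_monotoneOn (hbot.monotoneOn _), ← sum_add_distrib, ← sum_add_distrib]
  refine sum_congr rfl fun x hx => ?_
  have hx : x < s := mem_range.1 hx
  have hb : 2 * x ≤ symbEntry s d (s + x) ∧ symbEntry s d (s + x) ≤ 2 * x + 2 := by
    rw [symbEntry_add]
    split_ifs <;> omega
  rw [symbEntry_of_lt hx, sum_congr rfl fun i hi => by rw [symbEntry_of_lt (mem_range.1 hi)]]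
  push_cast
  rw [sum_range_max_two_mul hx (by omega) (by omega)]
  ring

theorem two_mul_sum_choose_symbEntry (s d : ℕ) :
    2 * ∑ k ∈ range (2 * s), ((symbEntry s d k + 1).choose 2 : ℤ) =
      ∑ x ∈ range s, ((2 * x + 1) * (2 * x : ℤ) +
        (symbEntry s d (s + x) + 1) * symbEntry s d (s + x)) := by
  rw [mul_sum, two_mul s, sum_range_add, ← sum_add_distrib]
  refine sum_congr rfl fun x hx => ?_
  rw [two_mul_choose_two, two_mul_choose_two, symbEntry_of_lt (mem_range.1 hx)]
  push_cast
  ring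

theorem symbA_symbEntry (s d m : ℕ) :
    symbA s m (symbEntry s d) =
      (m : ℤ) ^ 2 - (s : ℤ) ^ 2 - ∑ x ∈ range s, (x : ℤ) * (2 * x + 1)
        - ∑ x ∈ Ico (s - d) s, (2 * (x : ℤ) + 3) := by
  have hIco : Ico (s - d) s = (range s).filter (s - d ≤ ·) := by
    rw [range_eq_Ico, Ico_filter_le]
    simp
  unfold symbA
  rw [sum_ite_lt_max_eq_pairMaxSum, pairMaxSum_symbEntry, sum_Icc_choose_two_mul,
    two_mul_sum_choose_symbEntry, ← sum_sub_distrib, ← sum_sub_distrib, hIco, sum_filter]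
  have hsummand : ∀ x ∈ range s,
      2 * x * (x : ℤ) + (2 * x + 1) * symbEntry s d (s + x) + s * (s - 1) - x * (x + 1)
        - x * (2 * x - 1)
        - ((2 * x + 1) * (2 * x) + (symbEntry s d (s + x) + 1) * symbEntry s d (s + x))
      = s * (s - 1) - (3 * x ^ 2 + 3 * x + 1) - x * (2 * x + 1)
        - if s - d ≤ x then 2 * (x : ℤ) + 3 else 0 := by
    intro x _
    rw [symbEntry_add]
    split_ifs <;> first | omega | (push_cast; ring)
  rw [sum_congr rfl hsummand]
  simp only [sum_sub_distrib, sum_const, card_range, nsmul_eq_mul,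
    sum_range_three_mul_sq_add_three_mul_add_one]
  ring

theorem stmt18_general (s d m : ℕ) (hd : d ≤ s) (hm : m = s ^ 2 + d) :
    (m : ℤ) * ((m : ℤ) - 1) - symbA s m (symbEntry s d) =
      ((s * (s - 1) * (4 * s + 1) / 6 + d * (2 * s + 1 - d) : ℕ) : ℤ) := by
  subst hm
  rw [symbA_symbEntry, sum_Ico_two_mul_add_three (Nat.sub_le s d),
    ← sum_range_mul_two_mul_add_one]
  push_cast [Nat.cast_sub hd, Nat.cast_sub (show d ≤ 2 * s + 1 by omega)]
  ring

/-- For the symbol `S_min` with rows `(0,2,…,2(s−1))` and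
`(1,3,…,2(s−d)−1, 2(s−d+1),…,2s)` where `m = s² + d`, `0 ≤ d ≤ s`, one has
`m(m−1) − A(S_min) = s(s−1)(4s+1)/6 + d(2s+1−d)`. -/
theorem stmt18 (s d m : ℕ) (hs : 1 ≤ s) (hd : d ≤ s) (hm : m = s ^ 2 + d) :
    (m : ℤ) * ((m : ℤ) - 1) - symbA s m (symbEntry s d) =
      ((s * (s - 1) * (4 * s + 1) / 6 + d * (2 * s + 1 - d) : ℕ) : ℤ) :=
  stmt18_general s d m hd hm
end
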